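/- Let β be a quadratic Pisot number, T the β-transformation, and σ : ℚ(β) → ℝ the ring embedding with σ(β) ≠ β. For x ∈ ℤ[β] ∩ [0,1) and k ∈ ℕ set A_k(x) = {σ(β^k·w) : w ∈ [0,1) ∩ ℤ[β], T^k(w) = x}. Then each A_k(x) is nonempty and bounded, and the Hausdorff distance between A_{k+1}(x) and A_k(x) is at most (⌈β⌉ − 1)·|σ(β)|^k. -/
import Mathlib


noncomputable section

open IntermediateField

/-- The β-transformation `T(x) = βx − ⌊βx⌋`. -/
def betaT (β : ℝ) (x : ℝ) : ℝ := Int.fract (β * x)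

/-- `A_k(x) = {σ(β^k·w) : w ∈ [0,1) ∩ ℤ[β], T^k(w) = x}`, the `k`-th approximation
of the integral beta-tile `S(x)`, seen through the Galois conjugation `σ`. -/
def tileApprox (β : ℝ) (σ : ℚ⟮β⟯ →+* ℝ) (x : ℝ) (k : ℕ) : Set ℝ :=
  {t | ∃ w : ℚ⟮β⟯, (w : ℝ) ∈ Set.Ico (0 : ℝ) 1 ∧
    (w : ℝ) ∈ Algebra.adjoin ℤ ({β} : Set ℝ) ∧ (betaT β)^[k] (w : ℝ) = x ∧
    t = σ (AdjoinSimple.gen ℚ β ^ k * w)}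

/-- A quadratic integer satisfies an integral quadratic relation. -/
lemma exists_quad_rel (β : ℝ) (hβint : IsIntegral ℤ β)
    (hdeg : Module.finrank ℚ ℚ⟮β⟯ = 2) : ∃ a b : ℤ, β ^ 2 = a * β + b := by
  have hQ : IsIntegral ℚ β := hβint.tower_top
  have h1 : (minpoly ℚ β).natDegree = 2 := by rw [← adjoin.finrank hQ, hdeg]
  have hM : (minpoly ℤ β).Monic := minpoly.monic hβint
  have h2 : (minpoly ℤ β).natDegree = 2 := by
    rw [minpoly.isIntegrallyClosed_eq_field_fractions' ℚ hβint] at h1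
    rwa [Polynomial.natDegree_map_eq_of_injective
      (algebraMap ℤ ℚ).injective_int] at h1
  have he : Polynomial.aeval β (minpoly ℤ β) = 0 := minpoly.aeval ℤ β
  rw [Polynomial.aeval_eq_sum_range, h2] at he
  simp only [Finset.sum_range_succ, Finset.sum_range_zero, zero_add,
    zsmul_eq_mul, pow_zero, pow_one, mul_one] at he
  have hc2 : (minpoly ℤ β).coeff 2 = 1 := by
    have := hM.coeff_natDegree; rwa [h2] at this
  rw [hc2] at he
  refine ⟨-((minpoly ℤ β).coeff 1), -((minpoly ℤ β).coeff 0), ?_⟩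
  push_cast
  push_cast at he
  linarith

/-- For a quadratic Pisot number `β` with Galois conjugation `σ` and
`x ∈ ℤ[β] ∩ [0,1)`, each `A_k(x)` is nonempty and bounded, and the Hausdorff
distance between `A_{k+1}(x)` and `A_k(x)` is at most `(⌈β⌉ − 1)·|σ(β)|^k`. -/
theorem tileApprox_cauchy (β : ℝ) (hβ1 : 1 < β) (hβint : IsIntegral ℤ β)
    (hdeg : Module.finrank ℚ ℚ⟮β⟯ = 2)
    (σ : ℚ⟮β⟯ →+* ℝ) (hσβ : σ (AdjoinSimple.gen ℚ β) ≠ β)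
    (hσabs : |σ (AdjoinSimple.gen ℚ β)| < 1)
    (x : ℝ) (hx : x ∈ (Algebra.adjoin ℤ ({β} : Set ℝ) : Set ℝ) ∩ Set.Ico (0 : ℝ) 1) :
    ∀ k : ℕ, (tileApprox β σ x k).Nonempty ∧ Bornology.IsBounded (tileApprox β σ x k) ∧
      Metric.hausdorffDist (tileApprox β σ x (k + 1)) (tileApprox β σ x k) ≤
        ((⌈β⌉ : ℝ) - 1) * |σ (AdjoinSimple.gen ℚ β)| ^ k := by
  obtain ⟨a, b, hab⟩ := exists_quad_rel β hβint hdeg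
  set g : ℚ⟮β⟯ := AdjoinSimple.gen ℚ β with hg
  set c : ℝ := σ g with hcdef
  have hβ0 : (0:ℝ) < β := lt_trans one_pos hβ1
  have hgcoe : (g : ℝ) = β := by exact_mod_cast AdjoinSimple.algebraMap_gen ℚ β
  have hinj : Function.Injective (fun w : ℚ⟮β⟯ => (w : ℝ)) := Subtype.coe_injective
  -- the quadratic relation in ℚ⟮β⟯ and for c
  have hgK : g ^ 2 = (a : ℚ⟮β⟯) * g + (b : ℚ⟮β⟯) := by
    apply hinj
    push_cast [hgcoe]
    exact hab
  have hc2 : c ^ 2 = a * c + b := by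
    have := congrArg σ hgK
    simpa [map_pow, map_add, map_mul, map_intCast] using this
  -- β + c = a, b = -βc
  have hsum : β + c = a := by
    have hne : β - c ≠ 0 := sub_ne_zero.mpr (fun h => hσβ h.symm)
    have h0 : (β - c) * (β + c - a) = 0 := by linear_combination hab - hc2
    rcases mul_eq_zero.mp h0 with h | h
    · exact absurd h hne
    · linarith
  have hbc : (b : ℝ) = -(β * c) := by linear_combination -hab + β * hsum
  have hb0 : b ≠ 0 := by
    intro h
    have hc0 : c = 0 := by
      rw [h] at hbc; push_cast at hbc
      rcases mul_eq_zero.mp (by linarith : β * c = 0) with h' | h'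
      · linarith
      · exact h'
    have hβa : β = algebraMap ℚ ℝ (a : ℚ) := by
      rw [hc0] at hsum
      rw [map_intCast]; linarith
    have hbot : ℚ⟮β⟯ = ⊥ := by
      rw [adjoin_simple_eq_bot_iff, IntermediateField.mem_bot]
      exact ⟨(a : ℚ), hβa.symm⟩
    rw [hbot] at hdeg
    rw [IntermediateField.finrank_bot] at hdeg
    norm_num at hdeg
  have hcabs : |c| < 1 := hσabs
  have hmβ : |(b : ℝ)| < β := by
    rw [hbc, abs_neg, abs_mul, abs_of_pos hβ0]
    calc β * |c| < β * 1 := by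
          apply mul_lt_mul_of_pos_left hcabs hβ0
      _ = β := mul_one β
  have hm0 : (0:ℤ) < |b| := abs_pos.mpr hb0
  -- description of ℤ[β]
  have hmem : ∀ y : ℝ, y ∈ Algebra.adjoin ℤ ({β} : Set ℝ) ↔ ∃ p q : ℤ, y = p + q * β := by
    intro y
    constructor
    · intro hy
      let S : Subalgebra ℤ ℝ :=
        { carrier := {y : ℝ | ∃ p q : ℤ, y = p + q * β}
          add_mem' := by
            rintro u v ⟨p, q, rfl⟩ ⟨p', q', rfl⟩
            exact ⟨p + p', q + q', by push_cast; ring⟩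
          mul_mem' := by
            rintro u v ⟨p, q, rfl⟩ ⟨p', q', rfl⟩
            refine ⟨p * p' + q * q' * b, p * q' + q * p' + q * q' * a, ?_⟩
            push_cast
            linear_combination (q : ℝ) * q' * hab
          one_mem' := ⟨1, 0, by push_cast; ring⟩
          zero_mem' := ⟨0, 0, by push_cast; ring⟩
          algebraMap_mem' := fun r => ⟨r, 0, by rw [eq_intCast]; push_cast; ring⟩ }
      have hsub : Algebra.adjoin ℤ ({β} : Set ℝ) ≤ S := by
        apply Algebra.adjoin_le
        rintro z hz
        rcases hz with rfl
        exact ⟨0, 1, by push_cast; ring⟩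
      exact hsub hy
    · rintro ⟨p, q, rfl⟩
      have h1 : ((p : ℤ) : ℝ) ∈ Algebra.adjoin ℤ ({β} : Set ℝ) := by
        have := Subalgebra.algebraMap_mem (Algebra.adjoin ℤ ({β} : Set ℝ)) p
        rwa [eq_intCast] at this
      have h2 : ((q : ℤ) : ℝ) ∈ Algebra.adjoin ℤ ({β} : Set ℝ) := by
        have := Subalgebra.algebraMap_mem (Algebra.adjoin ℤ ({β} : Set ℝ)) q
        rwa [eq_intCast] at this
      have hβmem : β ∈ Algebra.adjoin ℤ ({β} : Set ℝ) := Algebra.subset_adjoin rfl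
      exact add_mem h1 (mul_mem h2 hβmem)
  have hintmem : ∀ d : ℤ, ((d : ℝ)) ∈ Algebra.adjoin ℤ ({β} : Set ℝ) := by
    intro d; exact (hmem _).mpr ⟨d, 0, by push_cast; ring⟩
  -- the "Good" predicate
  set Good : ℕ → ℚ⟮β⟯ → Prop := fun k w =>
    (w : ℝ) ∈ Set.Ico (0:ℝ) 1 ∧ (w : ℝ) ∈ Algebra.adjoin ℤ ({β} : Set ℝ) ∧
      (betaT β)^[k] (w : ℝ) = x with hGood
  have htile : ∀ k, tileApprox β σ x k = {t | ∃ w : ℚ⟮β⟯, Good k w ∧ t = σ (g ^ k * w)} := by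
    intro k
    ext t
    constructor
    · rintro ⟨w, h1, h2, h3, h4⟩; exact ⟨w, ⟨h1, h2, h3⟩, h4⟩
    · rintro ⟨w, ⟨h1, h2, h3⟩, h4⟩; exact ⟨w, h1, h2, h3, h4⟩
  -- ceiling bound helper
  have hceil : ∀ d : ℤ, (d : ℝ) < β → (d : ℝ) ≤ (⌈β⌉ : ℝ) - 1 := by
    intro d hd
    have h1 : (d : ℝ) < (⌈β⌉ : ℝ) := lt_of_lt_of_le hd (Int.le_ceil β)
    have h2 : d < ⌈β⌉ := by exact_mod_cast h1
    have h3 : d ≤ ⌈β⌉ - 1 := by omega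
    have h4 : (d : ℝ) ≤ ((⌈β⌉ - 1 : ℤ) : ℝ) := by exact_mod_cast h3
    push_cast at h4
    linarith
  -- Step A: descend from level k+1 to level k
  have stepA : ∀ (k : ℕ) (w' : ℚ⟮β⟯), Good (k+1) w' →
      ∃ (w : ℚ⟮β⟯) (d : ℤ), Good k w ∧ 0 ≤ (d:ℝ) ∧ (d:ℝ) ≤ (⌈β⌉ : ℝ) - 1 ∧
        σ (g ^ (k+1) * w') = σ (g ^ k * w) + (d:ℝ) * c ^ k := by
    rintro k w' ⟨⟨h0, h1⟩, hadj, hiter⟩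
    set d : ℤ := ⌊β * (w' : ℝ)⌋ with hd
    refine ⟨g * w' - (d : ℚ⟮β⟯), d, ?_, ?_, ?_, ?_⟩
    · have hwcoe : ((g * w' - (d : ℚ⟮β⟯) : ℚ⟮β⟯) : ℝ) = β * (w' : ℝ) - d := by
        push_cast [hgcoe]; ring
      have hfr : ((g * w' - (d : ℚ⟮β⟯) : ℚ⟮β⟯) : ℝ) = betaT β (w' : ℝ) := by
        rw [hwcoe]; rfl
      refine ⟨?_, ?_, ?_⟩
      · rw [hfr]; exact ⟨Int.fract_nonneg _, Int.fract_lt_one _⟩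
      · rw [hwcoe]
        exact sub_mem (mul_mem (Algebra.subset_adjoin rfl) hadj) (hintmem d)
      · rw [hfr, ← Function.iterate_succ_apply]; exact hiter
    · have : (0:ℝ) ≤ β * (w' : ℝ) := mul_nonneg hβ0.le h0
      exact_mod_cast Int.floor_nonneg.mpr this
    · apply hceil
      have h2 : (d : ℝ) ≤ β * (w' : ℝ) := Int.floor_le _
      have h3 : β * (w' : ℝ) < β * 1 := mul_lt_mul_of_pos_left h1 hβ0
      linarith
    · have hK : g ^ (k+1) * w' = g ^ k * (g * w' - (d : ℚ⟮β⟯)) + (d : ℚ⟮β⟯) * g ^ k := by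
        ring
      rw [hK, map_add, map_mul, map_mul, map_pow, map_intCast]
  -- Step B: lift from level k to level k+1
  have stepB : ∀ (k : ℕ) (w : ℚ⟮β⟯), Good k w →
      ∃ (w' : ℚ⟮β⟯) (d : ℤ), Good (k+1) w' ∧ 0 ≤ (d:ℝ) ∧ (d:ℝ) ≤ (⌈β⌉ : ℝ) - 1 ∧
        σ (g ^ (k+1) * w') = σ (g ^ k * w) + (d:ℝ) * c ^ k := by
    rintro k w ⟨⟨h0, h1⟩, hadj, hiter⟩
    obtain ⟨p, q, hpq⟩ := (hmem _).mp hadj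
    set m : ℤ := |b| with hmdef
    set t : ℤ := ⌈((p : ℝ) - (w : ℝ)) / (m : ℝ)⌉ with htdef
    set d : ℤ := -p + m * t with hddef
    have hmR : (0:ℝ) < (m : ℝ) := by exact_mod_cast hm0
    have hmβR : (m : ℝ) < β := by rw [hmdef]; rw [Int.cast_abs]; exact hmβ
    have ht1 : (p : ℝ) - (w : ℝ) ≤ (m : ℝ) * (t : ℝ) := by
      have := Int.le_ceil (((p : ℝ) - (w : ℝ)) / (m : ℝ))
      calc (p : ℝ) - (w : ℝ) = ((p : ℝ) - (w : ℝ)) / (m : ℝ) * m := by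
            field_simp
        _ ≤ (t : ℝ) * m := by
            apply mul_le_mul_of_nonneg_right this hmR.le
        _ = (m : ℝ) * t := by ring
    have ht2 : (m : ℝ) * (t : ℝ) < (p : ℝ) - (w : ℝ) + m := by
      have := Int.ceil_lt_add_one (((p : ℝ) - (w : ℝ)) / (m : ℝ))
      calc (m : ℝ) * (t : ℝ) = (t : ℝ) * m := by ring
        _ < (((p : ℝ) - (w : ℝ)) / (m : ℝ) + 1) * m := by
            apply mul_lt_mul_of_pos_right this hmR
        _ = (p : ℝ) - (w : ℝ) + m := by field_simp
    have hd1 : (0:ℝ) ≤ (w : ℝ) + d := by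
      have : (d : ℝ) = -(p:ℝ) + (m:ℝ)*(t:ℝ) := by rw [hddef]; push_cast; ring
      rw [this]; linarith
    have hd2 : (w : ℝ) + d < (m : ℝ) := by
      have : (d : ℝ) = -(p:ℝ) + (m:ℝ)*(t:ℝ) := by rw [hddef]; push_cast; ring
      rw [this]; linarith
    -- the digit in ℤ[β]
    set u₁ : ℤ := if 0 ≤ b then t else -t with hu1def
    have hbu : b * u₁ = m * t := by
      rw [hu1def, hmdef]
      by_cases hbpos : 0 ≤ b
      · rw [if_pos hbpos, abs_of_nonneg hbpos]
      · rw [if_neg hbpos, abs_of_neg (by omega)]; ring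
    set u₀ : ℤ := q - a * u₁ with hu0def
    set w' : ℚ⟮β⟯ := (u₀ : ℚ⟮β⟯) + (u₁ : ℚ⟮β⟯) * g with hw'def
    have hw'coe : (w' : ℝ) = (u₀ : ℝ) + (u₁ : ℝ) * β := by
      rw [hw'def]; push_cast [hgcoe]; ring
    have hbuR : (b : ℝ) * (u₁ : ℝ) = (m : ℝ) * (t : ℝ) := by exact_mod_cast hbu
    have hu0R : (u₀ : ℝ) = (q : ℝ) - (a : ℝ) * (u₁ : ℝ) := by rw [hu0def]; push_cast; ring
    have hdR : (d : ℝ) = -(p:ℝ) + (m:ℝ)*(t:ℝ) := by rw [hddef]; push_cast; ring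
    have hβw' : β * (w' : ℝ) = (w : ℝ) + d := by
      rw [hw'coe, hpq, hu0R, hdR]
      linear_combination (u₁ : ℝ) * hab + hbuR
    have h0' : (0:ℝ) ≤ (w' : ℝ) := by
      have h := hd1; rw [← hβw'] at h
      exact (mul_nonneg_iff_of_pos_left hβ0).mp h
    have h1' : (w' : ℝ) < 1 := by
      have h : β * (w' : ℝ) < β * 1 := by rw [hβw', mul_one]; linarith
      exact (mul_lt_mul_iff_right₀ hβ0).mp h
    have hTw' : betaT β (w' : ℝ) = (w : ℝ) := by
      rw [betaT, hβw', Int.fract_add_intCast, Int.fract_eq_self.mpr ⟨h0, h1⟩]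
    have hd0 : 0 ≤ (d : ℝ) := by
      have hgt : (-1:ℝ) < (d:ℝ) := by linarith
      have : (-1:ℤ) < d := by exact_mod_cast hgt
      have : (0:ℤ) ≤ d := by omega
      exact_mod_cast this
    have hgw' : g * w' = w + (d : ℚ⟮β⟯) := by
      apply hinj
      push_cast [hgcoe]
      exact hβw'
    refine ⟨w', d, ⟨⟨h0', h1'⟩, ?_, ?_⟩, hd0, ?_, ?_⟩
    · rw [hw'coe]; exact (hmem _).mpr ⟨u₀, u₁, rfl⟩
    · rw [Function.iterate_succ_apply, hTw']; exact hiter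
    · apply hceil; linarith
    · have hK : g ^ (k+1) * w' = g ^ k * w + (d : ℚ⟮β⟯) * g ^ k := by
        rw [pow_succ, mul_assoc, hgw']; ring
      rw [hK, map_add, map_mul, map_mul, map_pow, map_intCast]
  -- the base point
  obtain ⟨hxadj, hx0, hx1⟩ : x ∈ (Algebra.adjoin ℤ ({β} : Set ℝ) : Set ℝ) ∧ 0 ≤ x ∧ x < 1 :=
    ⟨hx.1, hx.2.1, hx.2.2⟩
  obtain ⟨p₀, q₀, hxl⟩ := (hmem x).mp hxadj
  set xl : ℚ⟮β⟯ := (p₀ : ℚ⟮β⟯) + (q₀ : ℚ⟮β⟯) * g with hxldef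
  have hxlcoe : (xl : ℝ) = x := by rw [hxldef, hxl]; push_cast [hgcoe]; ring
  have good0 : Good 0 xl := by
    refine ⟨?_, ?_, ?_⟩
    · rw [hxlcoe]; exact ⟨hx0, hx1⟩
    · rw [hxlcoe]; exact hxadj
    · rw [Function.iterate_zero_apply, hxlcoe]
  have goodk : ∀ k, ∃ w, Good k w := by
    intro k
    induction k with
    | zero => exact ⟨xl, good0⟩
    | succ n ih =>
      obtain ⟨w, hw⟩ := ih
      obtain ⟨w', d, hw', _⟩ := stepB n w hw
      exact ⟨w', hw'⟩
  -- nonnegativity of the bound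
  have hceilβ : (1:ℝ) ≤ (⌈β⌉ : ℝ) - 1 := by
    have h1 : β ≤ (⌈β⌉ : ℝ) := Int.le_ceil β
    have h2 : (1:ℤ) < ⌈β⌉ := by exact_mod_cast lt_of_lt_of_le hβ1 h1
    have h3 : (2:ℤ) ≤ ⌈β⌉ := by omega
    have : (2:ℝ) ≤ (⌈β⌉ : ℝ) := by exact_mod_cast h3
    linarith
  have hDnn : ∀ k : ℕ, 0 ≤ ((⌈β⌉ : ℝ) - 1) * |c| ^ k := by
    intro k
    apply mul_nonneg (by linarith) (pow_nonneg (abs_nonneg c) k)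
  -- distance estimate
  have hdist : ∀ (k : ℕ) (s : ℝ) (d : ℤ), 0 ≤ (d:ℝ) → (d:ℝ) ≤ (⌈β⌉ : ℝ) - 1 →
      dist (s + (d:ℝ) * c ^ k) s ≤ ((⌈β⌉ : ℝ) - 1) * |c| ^ k := by
    intro k s d hd0 hd1
    rw [Real.dist_eq]
    have : s + (d:ℝ) * c ^ k - s = (d:ℝ) * c ^ k := by ring
    rw [this, abs_mul, abs_pow]
    apply mul_le_mul_of_nonneg_right _ (pow_nonneg (abs_nonneg c) k)
    rwa [abs_of_nonneg hd0]
  -- boundedness by induction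
  have bdd : ∀ k, Bornology.IsBounded (tileApprox β σ x k) := by
    intro k
    induction k with
    | zero =>
      apply Bornology.IsBounded.subset (Bornology.isBounded_singleton (x := σ xl))
      rw [htile]
      rintro _ ⟨w, ⟨_, _, hiter⟩, rfl⟩
      rw [Function.iterate_zero_apply] at hiter
      have hwx : w = xl := by
        apply hinj
        show (w : ℝ) = (xl : ℝ)
        rw [hiter, hxlcoe]
      simp [hwx]
    | succ n ih =>
      apply Bornology.IsBounded.subset (ih.cthickening (δ := ((⌈β⌉ : ℝ) - 1) * |c| ^ n))
      rw [htile, htile]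
      rintro _ ⟨w', hw', rfl⟩
      obtain ⟨w, d, hw, hd0, hd1, heq⟩ := stepA n w' hw'
      rw [heq]
      exact Metric.mem_cthickening_of_dist_le _ _ _ _ ⟨w, hw, rfl⟩ (hdist n _ d hd0 hd1)
  intro k
  refine ⟨?_, bdd k, ?_⟩
  · obtain ⟨w, hw⟩ := goodk k
    rw [htile]
    exact ⟨σ (g ^ k * w), w, hw, rfl⟩
  · apply Metric.hausdorffDist_le_of_mem_dist (hDnn k)
    · rw [htile, htile]
      rintro _ ⟨w', hw', rfl⟩
      obtain ⟨w, d, hw, hd0, hd1, heq⟩ := stepA k w' hw'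
      exact ⟨σ (g ^ k * w), ⟨w, hw, rfl⟩, by rw [heq]; exact hdist k _ d hd0 hd1⟩
    · rw [htile, htile]
      rintro _ ⟨w, hw, rfl⟩
      obtain ⟨w', d, hw', hd0, hd1, heq⟩ := stepB k w hw
      refine ⟨σ (g ^ (k+1) * w'), ⟨w', hw', rfl⟩, ?_⟩
      rw [heq, dist_comm]
      exact hdist k _ d hd0 hd1
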